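/- arXiv:2201.08777 — 2 statements merged into one kernel-verified Lean document; each statement's English description precedes it below -/
import Mathlib

section
/- Let $(R,\mathfrak{m})$ be a complete discrete valuation ring with finite residue field of size $q$, and let $G \simeq (R/\mathfrak{m}^{e_1})^{r_1} \times \cdots \times (R/\mathfrak{m}^{e_k})^{r_k}$ with $e_1 > e_2 > \cdots > e_k \geq 1$ and $r_1, \dots, r_k \geq 1$. Then $|\mathrm{Aut}_R(G)| = \prod_{i=1}^{k} q^{-r_i^2}|\mathrm{GL}_{r_i}(\mathbb{F}_q)| \cdot \prod_{1 \leq i,j \leq k} q^{\min(e_i,e_j) r_i r_j}$. -/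
open Function

set_option linter.unusedSectionVars false
set_option linter.unusedVariables false
set_option maxHeartbeats 1000000

abbrev Idx' {k : ℕ} (r : Fin k → ℕ) := (i : Fin k) × Fin (r i)



section Count

variable {A B : Type*} [AddCommGroup A] [AddCommGroup B]

/-- decompose a preimage subtype along an additive hom -/
noncomputable def preimageEquiv (f : A →+ B) (P : B → Prop) :
    {a : A // P (f a)} ≃ {b : B // b ∈ Set.range f ∧ P b} × f.ker := by
  classical
  set pre : B → A := fun b => if h : b ∈ Set.range f then h.choose else 0 with hpre
  have hpre_eq : ∀ b : B, b ∈ Set.range f → f (pre b) = b := by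
    intro b hb
    simp only [hpre, dif_pos hb]
    exact hb.choose_spec
  refine
    { toFun := fun a => (⟨f a.1, ⟨a.1, rfl⟩, a.2⟩, ⟨a.1 - pre (f a.1), ?_⟩)
      invFun := fun x => ⟨x.2.1 + pre x.1.1, ?_⟩
      left_inv := ?_
      right_inv := ?_ }
  · simp [AddMonoidHom.mem_ker, hpre_eq (f a.1) ⟨a.1, rfl⟩]
  · have h2 : f x.2.1 = 0 := x.2.2
    have : f (x.2.1 + pre x.1.1) = x.1.1 := by
      rw [map_add, h2, zero_add, hpre_eq x.1.1 x.1.2.1]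
    rw [this]; exact x.1.2.2
  · intro a; ext; simp
  · rintro ⟨⟨b, hb, hPb⟩, ⟨c, hc⟩⟩
    have h2 : f c = 0 := hc
    have hfb : f (c + pre b) = b := by rw [map_add, h2, zero_add, hpre_eq b hb]
    ext
    · simp [hfb]
    · simp [hfb]

lemma card_preimage (f : A →+ B) (P : B → Prop) :
    Nat.card {a : A // P (f a)} =
      Nat.card {b : B // b ∈ Set.range f ∧ P b} * Nat.card f.ker := by
  rw [Nat.card_congr (preimageEquiv f P), Nat.card_prod]

lemma finite_preimage (f : A →+ B) [Finite B] [Finite f.ker] : Finite A := by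
  have e := (preimageEquiv f (fun _ => True)).symm.trans (Equiv.subtypeUnivEquiv (fun _ => trivial))
  exact Finite.of_surjective e e.surjective

end Count

section DVR

variable {R : Type} [CommRing R] [IsDomain R] [IsDiscreteValuationRing R]
  [Finite (IsLocalRing.ResidueField R)]

local notation "𝔪" => IsLocalRing.maximalIdeal R

lemma mem_m_pow_iff' {ϖ : R} (hϖ : 𝔪 = Ideal.span {ϖ}) (n : ℕ) (x : R) :
    x ∈ (𝔪 ^ n : Ideal R) ↔ ϖ ^ n ∣ x := by
  rw [hϖ, Ideal.span_singleton_pow, Ideal.mem_span_singleton]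

lemma finite_quot_and_card' {ϖ : R} (hϖ : 𝔪 = Ideal.span {ϖ}) (n : ℕ) :
    Finite (R ⧸ (𝔪 ^ n : Ideal R)) ∧
      Nat.card (R ⧸ (𝔪 ^ n : Ideal R)) = Nat.card (IsLocalRing.ResidueField R) ^ n := by
  have hϖ0 : ϖ ≠ 0 := by
    have : Irreducible ϖ := (IsDiscreteValuationRing.irreducible_iff_uniformizer ϖ).mpr hϖ
    exact this.ne_zero
  induction n with
  | zero =>
    have h : (𝔪 ^ 0 : Ideal R) = ⊤ := by rw [pow_zero, Ideal.one_eq_top]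
    haveI : Subsingleton (R ⧸ (𝔪 ^ 0 : Ideal R)) := by
      rw [Submodule.Quotient.subsingleton_iff]; exact h
    exact ⟨inferInstance, by rw [Nat.card_of_subsingleton (0 : R ⧸ (𝔪 ^ 0 : Ideal R)), pow_zero]⟩
  | succ n ih =>
    obtain ⟨ihF, ihC⟩ := ih
    -- the projection map
    have hle : (𝔪 ^ (n+1) : Ideal R) ≤ Submodule.comap LinearMap.id (𝔪 ^ n : Ideal R) :=
      fun x hx => Ideal.pow_le_pow_right (Nat.le_succ n) hx
    set f : (R ⧸ (𝔪 ^ (n+1) : Ideal R)) →ₗ[R] (R ⧸ (𝔪 ^ n : Ideal R)) :=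
      Submodule.mapQ _ _ LinearMap.id hle with hf
    have hfsurj : Surjective f := by
      intro x
      obtain ⟨y, rfl⟩ := Submodule.Quotient.mk_surjective _ x
      exact ⟨Submodule.Quotient.mk y, by simp [hf, ← Ideal.Quotient.mk_eq_mk, Submodule.mapQ_apply]⟩
    -- the kernel of f is isomorphic to the residue field
    set g : R →ₗ[R] (R ⧸ (𝔪 ^ (n+1) : Ideal R)) :=
      (Submodule.mkQ _) ∘ₗ (LinearMap.lsmul R R (ϖ ^ n)) with hg
    have hgapp : ∀ s : R, g s = Submodule.Quotient.mk (ϖ ^ n * s) := by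
      intro s; simp [hg, LinearMap.lsmul_apply, smul_eq_mul]
    have hker𝔪 : 𝔪 ≤ LinearMap.ker g := by
      intro m hm
      rw [LinearMap.mem_ker, hgapp, Submodule.Quotient.mk_eq_zero]
      rw [mem_m_pow_iff' hϖ]
      rw [hϖ, Ideal.mem_span_singleton] at hm
      obtain ⟨c, rfl⟩ := hm
      ring_nf
      exact ⟨c, by ring⟩
    set ghat : (R ⧸ 𝔪) →ₗ[R] (R ⧸ (𝔪 ^ (n+1) : Ideal R)) :=
      Submodule.liftQ 𝔪 g hker𝔪 with hghat
    have hghat_inj : Injective ghat := by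
      rw [← LinearMap.ker_eq_bot, Submodule.ker_liftQ_eq_bot]
      intro m hm
      rw [LinearMap.mem_ker, hgapp, Submodule.Quotient.mk_eq_zero, mem_m_pow_iff' hϖ] at hm
      obtain ⟨c, hc⟩ := hm
      rw [pow_succ, mul_assoc] at hc
      have : m = ϖ * c := mul_left_cancel₀ (pow_ne_zero n hϖ0) hc
      rw [hϖ, Ideal.mem_span_singleton]
      exact ⟨c, this⟩
    have hghat_range : LinearMap.range ghat = LinearMap.ker f := by
      rw [hghat, Submodule.range_liftQ]
      apply le_antisymm
      · rintro _ ⟨s, rfl⟩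
        rw [LinearMap.mem_ker, hgapp, hf, Submodule.mapQ_apply, LinearMap.id_apply,
          Submodule.Quotient.mk_eq_zero, mem_m_pow_iff' hϖ]
        exact ⟨s, rfl⟩
      · rintro x hx
        obtain ⟨y, rfl⟩ := Submodule.Quotient.mk_surjective _ x
        rw [LinearMap.mem_ker, hf, Submodule.mapQ_apply, LinearMap.id_apply,
          Submodule.Quotient.mk_eq_zero, mem_m_pow_iff' hϖ] at hx
        obtain ⟨c, rfl⟩ := hx
        exact ⟨c, by rw [hgapp]⟩
    have hker_equiv : (IsLocalRing.ResidueField R) ≃ (LinearMap.ker f) := by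
      refine (LinearEquiv.ofInjective ghat hghat_inj).toEquiv.trans (Equiv.setCongr ?_)
      rw [hghat_range]
    -- now count
    haveI : Finite (R ⧸ (𝔪 ^ n : Ideal R)) := ihF
    haveI hFkf : Finite (LinearMap.ker f) := Finite.of_equiv _ hker_equiv
    haveI hFkf' : Finite (f.toAddMonoidHom.ker) := by
      refine Finite.of_equiv (LinearMap.ker f) (Equiv.setCongr ?_)
      rfl
    haveI hFA : Finite (R ⧸ (𝔪 ^ (n+1) : Ideal R)) := finite_preimage f.toAddMonoidHom
    refine ⟨hFA, ?_⟩
    have hcount := card_preimage f.toAddMonoidHom (fun _ => True)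
    rw [Nat.card_congr (Equiv.subtypeUnivEquiv (fun _ => trivial))] at hcount
    have hrange : ∀ b, b ∈ Set.range f.toAddMonoidHom ∧ True := fun b => ⟨hfsurj b, trivial⟩
    rw [Nat.card_congr (Equiv.subtypeUnivEquiv hrange)] at hcount
    have hkercard : Nat.card f.toAddMonoidHom.ker = Nat.card (IsLocalRing.ResidueField R) := by
      refine (Nat.card_congr ?_).symm
      exact hker_equiv.trans (Equiv.setCongr rfl)
    rw [hcount, ihC, hkercard, pow_succ]

end DVR


section Hom
variable {R : Type} [CommRing R] [IsDomain R] [IsDiscreteValuationRing R]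
  [Finite (IsLocalRing.ResidueField R)]

local notation "𝔪" => IsLocalRing.maximalIdeal R


lemma hom_ext_one {a : ℕ} {N : Type*} [AddCommGroup N] [Module R N]
    {f g : (R ⧸ (𝔪 ^ a : Ideal R)) →ₗ[R] N}
    (h : f (Submodule.Quotient.mk 1) = g (Submodule.Quotient.mk 1)) : f = g := by
  refine Submodule.linearMap_qext _ ?_
  exact LinearMap.ext_ring h

section homdef
variable {ϖ : R} (hϖ : IsLocalRing.maximalIdeal R = Ideal.span {ϖ}) (a b : ℕ)

private noncomputable def homOf (s : R) :
    (R ⧸ (𝔪 ^ a : Ideal R)) →ₗ[R] (R ⧸ (𝔪 ^ b : Ideal R)) := by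
  refine Submodule.liftQ _ ((Submodule.mkQ _) ∘ₗ (LinearMap.lsmul R R (ϖ ^ (b - a) * s))) ?_
  intro u hu
  rw [mem_m_pow_iff' hϖ] at hu
  obtain ⟨c, rfl⟩ := hu
  simp only [LinearMap.mem_ker, LinearMap.comp_apply, LinearMap.lsmul_apply, smul_eq_mul,
    Submodule.mkQ_apply, Submodule.Quotient.mk_eq_zero]
  rw [mem_m_pow_iff' hϖ]
  refine dvd_trans (pow_dvd_pow ϖ (le_tsub_add : b ≤ b - a + a)) ⟨s * c, by rw [pow_add]; ring⟩

lemma homOf_apply (s u : R) :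
    homOf hϖ a b s (Submodule.Quotient.mk u) = Submodule.Quotient.mk (ϖ ^ (b - a) * s * u) := by
  simp only [homOf, Submodule.liftQ_apply, LinearMap.comp_apply, LinearMap.lsmul_apply,
    smul_eq_mul, Submodule.mkQ_apply]

lemma homOf_congr (hϖ0 : ϖ ≠ 0) (s s' : R) (h : s - s' ∈ (𝔪 ^ (min a b) : Ideal R)) :
    homOf hϖ a b s = homOf hϖ a b s' := by
  refine hom_ext_one ?_
  rw [homOf_apply, homOf_apply, mul_one, mul_one, Submodule.Quotient.eq]
  rw [mem_m_pow_iff' hϖ] at h ⊢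
  obtain ⟨c, hc⟩ := h
  have hpow : ϖ ^ b = ϖ ^ (b - a) * ϖ ^ (min a b) := by
    rw [← pow_add]; congr 1; omega
  have hthis : ϖ ^ (b - a) * s - ϖ ^ (b - a) * s' = ϖ ^ (b - a) * (s - s') := by ring
  exact ⟨c, by rw [hthis, hc, hpow]; ring⟩

noncomputable def homEquiv (hϖ0 : ϖ ≠ 0) :
    (R ⧸ (𝔪 ^ (min a b) : Ideal R)) ≃
      ((R ⧸ (𝔪 ^ a : Ideal R)) →ₗ[R] (R ⧸ (𝔪 ^ b : Ideal R))) := by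
  have mksurj : Surjective (Submodule.Quotient.mk (p := (𝔪 ^ (min a b) : Ideal R))) :=
    Submodule.Quotient.mk_surjective _
  refine Equiv.ofBijective (fun c => homOf hϖ a b (surjInv mksurj c)) ⟨?_, ?_⟩
  · intro c c' hcc
    have h1 : Submodule.Quotient.mk (surjInv mksurj c) = c := surjInv_eq mksurj c
    have h1' : Submodule.Quotient.mk (surjInv mksurj c') = c' := surjInv_eq mksurj c'
    set s := surjInv mksurj c
    set s' := surjInv mksurj c'
    have := congrArg (fun f => f (Submodule.Quotient.mk (p := (𝔪 ^ a : Ideal R)) 1)) hcc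
    simp only [homOf_apply, mul_one] at this
    rw [Submodule.Quotient.eq] at this
    rw [mem_m_pow_iff' hϖ] at this
    obtain ⟨c0, hc0⟩ := this
    have hfac : ϖ ^ (b - a) * s - ϖ ^ (b - a) * s' = ϖ ^ (b - a) * (s - s') := by ring
    have hpow : ϖ ^ b = ϖ ^ (b - a) * ϖ ^ (min a b) := by
      rw [← pow_add]; congr 1; omega
    rw [hfac, hpow, mul_assoc] at hc0
    have h2 : s - s' = ϖ ^ (min a b) * c0 :=
      mul_left_cancel₀ (pow_ne_zero _ hϖ0) hc0
    rw [← h1, ← h1', Submodule.Quotient.eq, mem_m_pow_iff' hϖ]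
    exact ⟨c0, h2⟩
  · intro f
    have mksurjb : Surjective (Submodule.Quotient.mk (p := (𝔪 ^ b : Ideal R))) :=
      Submodule.Quotient.mk_surjective _
    set d := surjInv mksurjb (f (Submodule.Quotient.mk 1)) with hd
    have hdval : Submodule.Quotient.mk d = f (Submodule.Quotient.mk 1) := surjInv_eq mksurjb _
    have hkill : (ϖ ^ a) • f (Submodule.Quotient.mk (p := (𝔪 ^ a : Ideal R)) 1) = 0 := by
      rw [← map_smul]
      have : (ϖ ^ a) • (Submodule.Quotient.mk (p := (𝔪 ^ a : Ideal R)) 1) = 0 := by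
        rw [← Submodule.Quotient.mk_smul, Submodule.Quotient.mk_eq_zero]
        rw [mem_m_pow_iff' hϖ]
        exact ⟨1, by simp [smul_eq_mul]⟩
      rw [this, map_zero]
    rw [← hdval, ← Submodule.Quotient.mk_smul, Submodule.Quotient.mk_eq_zero,
      mem_m_pow_iff' hϖ, smul_eq_mul] at hkill
    obtain ⟨c0, hc0⟩ := hkill
    -- find s with ϖ^(b-a) * s ≡ d mod 𝔪^b
    have hs : ∃ s : R, Submodule.Quotient.mk (p := (𝔪 ^ b : Ideal R)) (ϖ ^ (b - a) * s)
        = Submodule.Quotient.mk d := by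
      rcases le_total a b with hab | hab
      · have hbeq : b = a + (b - a) := by omega
        rw [hbeq, pow_add, mul_assoc] at hc0
        have : d = ϖ ^ (b - a) * c0 := mul_left_cancel₀ (pow_ne_zero _ hϖ0) hc0
        exact ⟨c0, by rw [← this]⟩
      · have : b - a = 0 := by omega
        exact ⟨d, by rw [this, pow_zero, one_mul]⟩
    obtain ⟨s, hseq⟩ := hs
    refine ⟨Submodule.Quotient.mk s, ?_⟩
    have hcongr : homOf hϖ a b (surjInv mksurj (Submodule.Quotient.mk s)) = homOf hϖ a b s := by
      refine homOf_congr hϖ a b hϖ0 _ _ ?_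
      rw [← Submodule.Quotient.eq]
      exact surjInv_eq mksurj _
    show homOf hϖ a b (surjInv mksurj (Submodule.Quotient.mk s)) = f
    rw [hcongr]
    refine hom_ext_one ?_
    rw [homOf_apply, mul_one, hseq, hdval]

include hϖ in
lemma hom_card' (hϖ0 : ϖ ≠ 0) :
    Nat.card ((R ⧸ (𝔪 ^ a : Ideal R)) →ₗ[R] (R ⧸ (𝔪 ^ b : Ideal R))) =
      Nat.card (IsLocalRing.ResidueField R) ^ (min a b) := by
  rw [← Nat.card_congr (homEquiv hϖ a b hϖ0)]
  exact (finite_quot_and_card' hϖ (min a b)).2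

end homdef
end Hom


section MatrixCount

variable {K : Type} [Field K]
variable {k : ℕ} (e r : Fin k → ℕ)

def ofPieces (Ms : ∀ i, Matrix (Fin (r i)) (Fin (r i)) K)
    (c : {p : Idx' r × Idx' r // e p.1.1 < e p.2.1} → K) : Matrix (Idx' r) (Idx' r) K :=
  Matrix.of fun x y =>
    if h : y.1 = x.1 then Ms x.1 x.2 (h ▸ y.2)
    else if h2 : e x.1 < e y.1 then c ⟨(x, y), h2⟩ else 0

variable (hinj : Function.Injective e) (hr : ∀ i, 1 ≤ r i)

include hinj in
lemma ofPieces_bt (Ms : ∀ i, Matrix (Fin (r i)) (Fin (r i)) K)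
    (c : {p : Idx' r × Idx' r // e p.1.1 < e p.2.1} → K) : (ofPieces e r Ms c).BlockTriangular (fun x => e x.1) := by
  intro x y hxy
  have h1 : ¬ (y.1 = x.1) := fun hh => absurd (congrArg e hh) (ne_of_lt hxy)
  have h2 : ¬ (e x.1 < e y.1) := lt_asymm hxy
  simp only [ofPieces, Matrix.of_apply, dif_neg h1, dif_neg h2]

noncomputable def pieceEquiv :
    {A : Matrix (Idx' r) (Idx' r) K // A.BlockTriangular (fun x => e x.1)} ≃
      (∀ i, Matrix (Fin (r i)) (Fin (r i)) K) ×
        ({p : Idx' r × Idx' r // e p.1.1 < e p.2.1} → K) where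
  toFun A := (fun i => Matrix.of fun a b => A.1 ⟨i, a⟩ ⟨i, b⟩, fun p => A.1 p.1.1 p.1.2)
  invFun Mc := ⟨ofPieces e r Mc.1 Mc.2, ofPieces_bt e r hinj Mc.1 Mc.2⟩
  left_inv := by
    rintro ⟨A, hA⟩
    apply Subtype.ext
    funext x y
    obtain ⟨i, a⟩ := x
    obtain ⟨j, b⟩ := y
    show ofPieces e r _ _ ⟨i, a⟩ ⟨j, b⟩ = A ⟨i, a⟩ ⟨j, b⟩
    by_cases h : j = i
    · subst h
      simp [ofPieces]
    · simp only [ofPieces, Matrix.of_apply, dif_neg h]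
      by_cases h2 : e i < e j
      · simp only [dif_pos h2]
      · simp only [dif_neg h2]
        have h3 : e j < e i := by
          rcases lt_trichotomy (e i) (e j) with h' | h' | h'
          · exact absurd h' h2
          · exact absurd (hinj h') (fun hh => h hh.symm)
          · exact h'
        exact (hA h3).symm
  right_inv := by
    rintro ⟨Ms, c⟩
    refine Prod.ext ?_ ?_
    · funext i a b
      show ofPieces e r Ms c ⟨i, a⟩ ⟨i, b⟩ = Ms i a b
      simp [ofPieces]
    · funext p
      obtain ⟨⟨x, y⟩, hp⟩ := p
      show ofPieces e r Ms c x y = c ⟨(x, y), hp⟩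
      have h1 : ¬ (y.1 = x.1) := fun hh => absurd (congrArg e hh).symm (ne_of_lt hp)
      simp only [ofPieces, Matrix.of_apply, dif_neg h1, dif_pos hp]

def blockIdx (i : Fin k) :
    Fin (r i) ≃ {x : Idx' r // (fun x : Idx' r => e x.1) x = e i} where
  toFun a := ⟨⟨i, a⟩, rfl⟩
  invFun x := Fin.cast (congrArg r (hinj x.2)) x.1.2
  left_inv a := by apply Fin.ext; simp
  right_inv x := by
    obtain ⟨⟨j, b⟩, hx⟩ := x
    have hji : j = i := hinj hx
    subst hji
    apply Subtype.ext
    show (⟨j, Fin.cast _ b⟩ : Idx' r) = ⟨j, b⟩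
    have hc : Fin.cast (congrArg r (hinj hx)) b = b := by apply Fin.ext; simp
    rw [hc]

include hinj hr in
lemma isUnit_det_iff_blocks (A : Matrix (Idx' r) (Idx' r) K)
    (hA : A.BlockTriangular (fun x => e x.1)) :
    IsUnit A.det ↔ ∀ i, IsUnit (Matrix.of fun a b => A ⟨i, a⟩ ⟨i, b⟩).det := by
  classical
  rw [hA.det]
  have himg : (Finset.univ.image fun x : Idx' r => e x.1) = Finset.univ.image e := by
    ext v
    simp only [Finset.mem_image, Finset.mem_univ, true_and]
    constructor
    · rintro ⟨x, hx⟩; exact ⟨x.1, hx⟩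
    · rintro ⟨i, hi⟩; exact ⟨⟨i, ⟨0, hr i⟩⟩, hi⟩
  rw [himg, Finset.prod_image (fun i _ j _ hij => hinj hij)]
  have hblock : ∀ i, (A.toSquareBlock (fun x : Idx' r => e x.1) (e i)).det =
      (Matrix.of fun a b => A ⟨i, a⟩ ⟨i, b⟩).det := by
    intro i
    rw [← Matrix.det_submatrix_equiv_self (blockIdx e r hinj i)
      (A.toSquareBlock (fun x : Idx' r => e x.1) (e i))]
    rfl
  rw [isUnit_iff_ne_zero, Finset.prod_ne_zero_iff]
  constructor
  · intro h i
    rw [isUnit_iff_ne_zero, ← hblock i]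
    exact h i (Finset.mem_univ i)
  · intro h i _
    rw [hblock i]
    exact isUnit_iff_ne_zero.mp (h i)

include hinj in
lemma card_bt' :
    Nat.card {A : Matrix (Idx' r) (Idx' r) K // A.BlockTriangular (fun x => e x.1)} =
      (∏ i, Nat.card (Matrix (Fin (r i)) (Fin (r i)) K)) *
        Nat.card ({p : Idx' r × Idx' r // e p.1.1 < e p.2.1} → K) := by
  rw [Nat.card_congr (pieceEquiv e r hinj), Nat.card_prod, Nat.card_pi]

include hinj hr in
lemma card_bt_unit' :
    Nat.card {A : Matrix (Idx' r) (Idx' r) K //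
        A.BlockTriangular (fun x => e x.1) ∧ IsUnit A.det} =
      (∏ i, Nat.card {B : Matrix (Fin (r i)) (Fin (r i)) K // IsUnit B.det}) *
        Nat.card ({p : Idx' r × Idx' r // e p.1.1 < e p.2.1} → K) := by
  have e1 : {A : Matrix (Idx' r) (Idx' r) K //
      A.BlockTriangular (fun x => e x.1) ∧ IsUnit A.det} ≃
      {x : {A : Matrix (Idx' r) (Idx' r) K // A.BlockTriangular (fun x => e x.1)} //
        IsUnit x.1.det} :=
    { toFun := fun A => ⟨⟨A.1, A.2.1⟩, A.2.2⟩
      invFun := fun x => ⟨x.1.1, x.1.2, x.2⟩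
      left_inv := fun A => rfl
      right_inv := fun x => rfl }
  have e2 : {x : {A : Matrix (Idx' r) (Idx' r) K // A.BlockTriangular (fun x => e x.1)} //
        IsUnit x.1.det} ≃
      {Mc : (∀ i, Matrix (Fin (r i)) (Fin (r i)) K) ×
        ({p : Idx' r × Idx' r // e p.1.1 < e p.2.1} → K) //
          ∀ i, IsUnit ((Matrix.of fun a b => Mc.1 i a b).det)} :=
    Equiv.subtypeEquiv (pieceEquiv e r hinj)
      (fun x => isUnit_det_iff_blocks e r hinj hr x.1 x.2)
  have e3 : {Mc : (∀ i, Matrix (Fin (r i)) (Fin (r i)) K) ×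
      ({p : Idx' r × Idx' r // e p.1.1 < e p.2.1} → K) //
        ∀ i, IsUnit ((Matrix.of fun a b => Mc.1 i a b).det)} ≃
      {Ms : ∀ i, Matrix (Fin (r i)) (Fin (r i)) K // ∀ i, IsUnit (Ms i).det} ×
        ({p : Idx' r × Idx' r // e p.1.1 < e p.2.1} → K) :=
    { toFun := fun x => (⟨x.1.1, x.2⟩, x.1.2)
      invFun := fun y => ⟨(y.1.1, y.2), y.1.2⟩
      left_inv := fun x => rfl
      right_inv := fun y => rfl }
  have e4 : {Ms : ∀ i, Matrix (Fin (r i)) (Fin (r i)) K // ∀ i, IsUnit (Ms i).det} ≃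
      ∀ i, {B : Matrix (Fin (r i)) (Fin (r i)) K // IsUnit B.det} :=
    { toFun := fun x i => ⟨x.1 i, x.2 i⟩
      invFun := fun f => ⟨fun i => (f i).1, fun i => (f i).2⟩
      left_inv := fun x => rfl
      right_inv := fun f => funext fun i => Subtype.ext rfl }
  rw [Nat.card_congr (((e1.trans e2).trans e3).trans (Equiv.prodCongr e4 (Equiv.refl _))),
    Nat.card_prod, Nat.card_pi]

lemma card_gl_eq' (n : ℕ) : Nat.card (Matrix.GeneralLinearGroup (Fin n) K) =
    Nat.card {B : Matrix (Fin n) (Fin n) K // IsUnit B.det} := by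
  refine Nat.card_congr ?_
  refine
    { toFun := fun g => ⟨g.1, ?_⟩
      invFun := fun B => Matrix.GeneralLinearGroup.mk'' B.1 B.2
      left_inv := ?_
      right_inv := ?_ }
  · exact (Matrix.isUnit_iff_isUnit_det _).mp ⟨g, rfl⟩
  · intro g
    apply Units.ext
    rfl
  · intro B
    apply Subtype.ext
    rfl

end MatrixCount



abbrev MM (R : Type) [CommRing R] [IsDomain R] [IsDiscreteValuationRing R]
    {k : ℕ} (e r : Fin k → ℕ) : Type :=
  ∀ x : Idx' r, R ⧸ (IsLocalRing.maximalIdeal R ^ e x.1 : Ideal R)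

section Main
open IsLocalRing
variable {R : Type} [CommRing R] [IsDomain R] [IsDiscreteValuationRing R]
  [Finite (ResidueField R)] {k : ℕ} (e r : Fin k → ℕ)



noncomputable def rho (he1 : ∀ i, 1 ≤ e i) (x : Idx' r) :
    (R ⧸ (maximalIdeal R ^ e x.1 : Ideal R)) →+* ResidueField R :=
  Ideal.Quotient.factor (Ideal.pow_le_self (by have := he1 x.1; omega))

lemma rho_mk (he1 : ∀ i, 1 ≤ e i) (x : Idx' r) (s : R) :
    rho e r he1 x (Ideal.Quotient.mk _ s) = residue R s :=
  Ideal.Quotient.factor_mk _ s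

lemma rho_smul (he1 : ∀ i, 1 ≤ e i) (x : Idx' r) (c : R)
    (u : R ⧸ (maximalIdeal R ^ e x.1 : Ideal R)) :
    rho e r he1 x (c • u) = residue R c * rho e r he1 x u := by
  obtain ⟨s, rfl⟩ := Ideal.Quotient.mk_surjective u
  have h1 : c • (Ideal.Quotient.mk (maximalIdeal R ^ e x.1) s) = Ideal.Quotient.mk _ (c * s) := by
    rw [← Ideal.Quotient.mk_eq_mk, ← Ideal.Quotient.mk_eq_mk, ← Submodule.Quotient.mk_smul,
      smul_eq_mul]
  rw [h1, rho_mk, rho_mk, map_mul]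

noncomputable def lft (x : Idx' r) (c : R ⧸ (maximalIdeal R ^ e x.1 : Ideal R)) : R :=
  surjInv Ideal.Quotient.mk_surjective c

lemma mk_lft (x : Idx' r) (c : R ⧸ (maximalIdeal R ^ e x.1 : Ideal R)) :
    Ideal.Quotient.mk _ (lft e r x c) = c :=
  surjInv_eq _ c

lemma rho_eq_residue_lft (he1 : ∀ i, 1 ≤ e i) (x : Idx' r)
    (c : R ⧸ (maximalIdeal R ^ e x.1 : Ideal R)) :
    rho e r he1 x c = residue R (lft e r x c) := by
  conv_lhs => rw [← mk_lft e r x c]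
  rw [rho_mk]

noncomputable def esingle (x : Idx' r) : MM R e r := Pi.single x 1

lemma smul_one_eq (I : Ideal R) (c : R) : c • (1 : R ⧸ I) = Ideal.Quotient.mk I c := by
  rw [← (Ideal.Quotient.mk I).map_one, ← Ideal.Quotient.mk_eq_mk, ← Ideal.Quotient.mk_eq_mk,
    ← Submodule.Quotient.mk_smul, smul_eq_mul, mul_one]

lemma pi_decomp (v : MM R e r) :
    ∑ x : Idx' r, (lft e r x (v x)) • esingle e r x = v := by
  funext z
  rw [Finset.sum_apply]
  rw [Finset.sum_eq_single z]
  · rw [Pi.smul_apply, esingle, Pi.single_eq_same, smul_one_eq, mk_lft]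
  · intro x _ hxz
    rw [Pi.smul_apply, esingle, Pi.single_eq_of_ne (Ne.symm hxz), smul_zero]
  · intro h
    exact absurd (Finset.mem_univ z) h

noncomputable def redMat (he1 : ∀ i, 1 ≤ e i) (φ : MM R e r →ₗ[R] MM R e r) :
    Matrix (Idx' r) (Idx' r) (ResidueField R) :=
  Matrix.of fun x y => rho e r he1 x (φ (esingle e r y) x)

lemma redMat_apply (he1 : ∀ i, 1 ≤ e i) (φ : MM R e r →ₗ[R] MM R e r) (x y : Idx' r) :
    redMat e r he1 φ x y = rho e r he1 x (φ (esingle e r y) x) := rfl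

lemma redMat_add (he1 : ∀ i, 1 ≤ e i) (φ ψ : MM R e r →ₗ[R] MM R e r) :
    redMat e r he1 (φ + ψ) = redMat e r he1 φ + redMat e r he1 ψ := by
  funext x y
  simp only [redMat, Matrix.of_apply, LinearMap.add_apply, Pi.add_apply, map_add,
    Matrix.add_apply]

lemma redMat_id (he1 : ∀ i, 1 ≤ e i) :
    redMat e r he1 (LinearMap.id : MM R e r →ₗ[R] MM R e r) = 1 := by
  funext x y
  rw [redMat_apply, LinearMap.id_apply, esingle]
  by_cases h : x = y
  · subst h
    rw [Pi.single_eq_same, map_one, Matrix.one_apply_eq]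
  · rw [Pi.single_eq_of_ne h, map_zero, Matrix.one_apply_ne h]

lemma redMat_mul (he1 : ∀ i, 1 ≤ e i) (φ ψ : MM R e r →ₗ[R] MM R e r) :
    redMat e r he1 (φ ∘ₗ ψ) = redMat e r he1 φ * redMat e r he1 ψ := by
  funext x y
  rw [Matrix.mul_apply, redMat_apply, LinearMap.comp_apply]
  conv_lhs => rw [← pi_decomp e r (ψ (esingle e r y))]
  rw [map_sum, Finset.sum_apply, map_sum]
  refine Finset.sum_congr rfl ?_
  intro z _
  rw [map_smul, Pi.smul_apply, rho_smul, ← rho_eq_residue_lft e r he1, ← redMat_apply e r he1 ψ,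
    ← redMat_apply e r he1 φ, mul_comm]

lemma redMat_bt {ϖ : R} (hϖ : IsLocalRing.maximalIdeal R = Ideal.span {ϖ}) (hϖ0 : ϖ ≠ 0)
    (he1 : ∀ i, 1 ≤ e i) (φ : MM R e r →ₗ[R] MM R e r) :
    (redMat e r he1 φ).BlockTriangular (fun x => e x.1) := by
  intro x y hxy
  have hxy' : e y.1 < e x.1 := hxy
  set c := φ (esingle e r y) x with hc
  have hkill : (ϖ ^ e y.1) • c = 0 := by
    have hsz : (ϖ ^ e y.1) • esingle e r y = (0 : MM R e r) := by
      funext z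
      by_cases h : z = y
      · subst h
        rw [Pi.smul_apply, esingle, Pi.single_eq_same, smul_one_eq, Pi.zero_apply,
          Ideal.Quotient.eq_zero_iff_mem, mem_m_pow_iff' hϖ]
      · rw [Pi.smul_apply, esingle, Pi.single_eq_of_ne h, smul_zero, Pi.zero_apply]
    rw [hc, ← Pi.smul_apply, ← map_smul, hsz, map_zero, Pi.zero_apply]
  obtain ⟨s, hs⟩ := Ideal.Quotient.mk_surjective c
  have h0 : Ideal.Quotient.mk (maximalIdeal R ^ e x.1) (ϖ ^ e y.1 * s) = 0 := by
    rw [← smul_eq_mul, ← Ideal.Quotient.mk_eq_mk, Submodule.Quotient.mk_smul,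
      Ideal.Quotient.mk_eq_mk, hs, hkill]
  rw [Ideal.Quotient.eq_zero_iff_mem, mem_m_pow_iff' hϖ] at h0
  obtain ⟨c0, hc0⟩ := h0
  have hpow : ϖ ^ e x.1 = ϖ ^ e y.1 * ϖ ^ (e x.1 - e y.1) := by
    rw [← pow_add]; congr 1; omega
  rw [hpow, mul_assoc] at hc0
  have hsval : s = ϖ ^ (e x.1 - e y.1) * c0 := mul_left_cancel₀ (pow_ne_zero _ hϖ0) hc0
  rw [redMat_apply, ← hc, ← hs, rho_mk, hsval]
  show Ideal.Quotient.mk (maximalIdeal R) (ϖ ^ (e x.1 - e y.1) * c0) = 0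
  rw [Ideal.Quotient.eq_zero_iff_mem, hϖ, Ideal.mem_span_singleton]
  exact Dvd.dvd.mul_right (dvd_pow_self ϖ (by omega)) c0

section Surj
variable {ϖ : R} (hϖ : IsLocalRing.maximalIdeal R = Ideal.span {ϖ}) (hϖ0 : ϖ ≠ 0)
  (he1 : ∀ i, 1 ≤ e i)

noncomputable def alift (A : Matrix (Idx' r) (Idx' r) (ResidueField R)) (x y : Idx' r) : R :=
  if e y.1 < e x.1 then 0
  else surjInv (Ideal.Quotient.mk_surjective (I := maximalIdeal R)) (A x y)

noncomputable def colMap (A : Matrix (Idx' r) (Idx' r) (ResidueField R)) (y : Idx' r) :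
    R →ₗ[R] MM R e r :=
  LinearMap.pi fun x => (Submodule.mkQ _) ∘ₗ (LinearMap.lsmul R R (alift e r A x y))

lemma colMap_apply (A : Matrix (Idx' r) (Idx' r) (ResidueField R)) (y : Idx' r) (s : R)
    (x : Idx' r) :
    colMap e r A y s x = Ideal.Quotient.mk _ (alift e r A x y * s) := by
  simp only [colMap, LinearMap.pi_apply, LinearMap.comp_apply, LinearMap.lsmul_apply,
    smul_eq_mul, Submodule.mkQ_apply, Ideal.Quotient.mk_eq_mk]

include hϖ in
lemma colMap_ker (A : Matrix (Idx' r) (Idx' r) (ResidueField R)) (y : Idx' r) :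
    (IsLocalRing.maximalIdeal R ^ e y.1 : Ideal R) ≤ LinearMap.ker (colMap e r A y) := by
  intro s hs
  rw [LinearMap.mem_ker]
  funext x
  rw [colMap_apply, Pi.zero_apply, Ideal.Quotient.eq_zero_iff_mem]
  by_cases h : e y.1 < e x.1
  · rw [alift, if_pos h, zero_mul]
    exact Ideal.zero_mem _
  · refine Ideal.mul_mem_left _ _ ?_
    rw [mem_m_pow_iff' hϖ] at hs ⊢
    exact dvd_trans (pow_dvd_pow ϖ (by omega)) hs

noncomputable def phiOf (A : Matrix (Idx' r) (Idx' r) (ResidueField R)) :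
    MM R e r →ₗ[R] MM R e r :=
  LinearMap.lsum R (fun x : Idx' r => R ⧸ (maximalIdeal R ^ e x.1 : Ideal R)) R
    (fun y => Submodule.liftQ _ (colMap e r A y) (colMap_ker e r hϖ A y))

include hϖ0 in
lemma redMat_phiOf (A : Matrix (Idx' r) (Idx' r) (ResidueField R))
    (hA : A.BlockTriangular (fun x => e x.1)) :
    redMat e r he1 (phiOf e r hϖ A) = A := by
  funext x y
  rw [redMat_apply]
  have h1 : phiOf e r hϖ A (esingle e r y) x
      = Ideal.Quotient.mk _ (alift e r A x y) := by
    rw [phiOf, LinearMap.lsum_apply]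
    rw [LinearMap.sum_apply]
    have hterm : ∀ y' : Idx' r, y' ≠ y →
        ((Submodule.liftQ _ (colMap e r A y') (colMap_ker e r hϖ A y')) ∘ₗ
          (LinearMap.proj y')) (esingle e r y) = 0 := by
      intro y' hy'
      rw [LinearMap.comp_apply, LinearMap.proj_apply, esingle, Pi.single_eq_of_ne hy', map_zero]
    rw [Finset.sum_apply]
    rw [Finset.sum_eq_single y]
    · rw [LinearMap.comp_apply, LinearMap.proj_apply, esingle, Pi.single_eq_same]
      have hone : (1 : R ⧸ (maximalIdeal R ^ e y.1 : Ideal R)) = Submodule.Quotient.mk 1 := by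
        rw [Ideal.Quotient.mk_eq_mk, map_one]
      rw [hone, Submodule.liftQ_apply, colMap_apply, mul_one]
    · intro y' _ hy'
      rw [hterm y' hy', Pi.zero_apply]
    · intro h
      exact absurd (Finset.mem_univ y) h
  rw [h1, rho_mk]
  by_cases h : e y.1 < e x.1
  · rw [alift, if_pos h]
    rw [map_zero]
    exact (hA h).symm
  · rw [alift, if_neg h]
    exact surjInv_eq _ _

include hϖ in
lemma mem_smul_of_rho_zero (u : MM R e r) (hu : ∀ x, rho e r he1 x (u x) = 0) :
    u ∈ (IsLocalRing.maximalIdeal R • ⊤ : Submodule R (MM R e r)) := by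
  rw [← pi_decomp e r u]
  refine Submodule.sum_mem _ ?_
  intro x _
  refine Submodule.smul_mem_smul ?_ Submodule.mem_top
  have h1 : residue R (lft e r x (u x)) = 0 := by
    rw [← rho_eq_residue_lft e r he1]
    exact hu x
  exact Ideal.Quotient.eq_zero_iff_mem.mp h1

include hϖ hϖ0 in
lemma surjective_of_isUnit_det (φ : MM R e r →ₗ[R] MM R e r)
    (hu : IsUnit (redMat e r he1 φ).det) : Surjective φ := by
  haveI : ∀ x : Idx' r, Finite (R ⧸ (maximalIdeal R ^ e x.1 : Ideal R)) :=
    fun x => (finite_quot_and_card' hϖ _).1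
  rw [← LinearMap.range_eq_top]
  have key : (⊤ : Submodule R (MM R e r)) ≤ LinearMap.range φ := by
    refine Submodule.le_of_le_smul_of_le_jacobson_bot (Module.finite_def.mp inferInstance)
      (IsLocalRing.jacobson_eq_maximalIdeal (⊥ : Ideal R) bot_ne_top).ge ?_
    intro v _
    set A := redMat e r he1 φ with hA
    set B := A⁻¹ with hB
    have hAB : A * B = 1 := Matrix.mul_nonsing_inv A hu
    set blift : Idx' r → Idx' r → R := fun z x' =>
      surjInv (Ideal.Quotient.mk_surjective (I := maximalIdeal R)) (B z x') with hblift
    have hblift_res : ∀ z x', residue R (blift z x') = B z x' := fun z x' => surjInv_eq _ _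
    set w : MM R e r := ∑ x' : Idx' r, ∑ z : Idx' r,
      (lft e r x' (v x') * blift z x') • esingle e r z with hw
    have hφw : ∀ x, rho e r he1 x (φ w x) = rho e r he1 x (v x) := by
      intro x
      have h1 : φ w x = ∑ x' : Idx' r, ∑ z : Idx' r,
          (lft e r x' (v x') * blift z x') • (φ (esingle e r z) x) := by
        rw [hw, map_sum, Finset.sum_apply]
        refine Finset.sum_congr rfl ?_
        intro x' _
        rw [map_sum, Finset.sum_apply]
        refine Finset.sum_congr rfl ?_
        intro z _
        rw [map_smul, Pi.smul_apply]
      rw [h1, map_sum]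
      have h2 : ∀ x' : Idx' r, rho e r he1 x (∑ z : Idx' r,
          (lft e r x' (v x') * blift z x') • (φ (esingle e r z) x)) =
          residue R (lft e r x' (v x')) * ((A * B) x x') := by
        intro x'
        rw [map_sum, Matrix.mul_apply, Finset.mul_sum]
        refine Finset.sum_congr rfl ?_
        intro z _
        rw [rho_smul, map_mul, hblift_res, ← redMat_apply e r he1 φ, ← hA]
        ring
      rw [Finset.sum_congr rfl (fun x' _ => h2 x'), hAB]
      rw [Finset.sum_eq_single x]
      · rw [Matrix.one_apply_eq, mul_one, rho_eq_residue_lft e r he1]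
      · intro x' _ hx'
        rw [Matrix.one_apply_ne (Ne.symm hx'), mul_zero]
      · intro h
        exact absurd (Finset.mem_univ x) h
    refine Submodule.mem_sup.mpr ⟨φ w, LinearMap.mem_range_self φ w, v - φ w, ?_, by abel⟩
    refine mem_smul_of_rho_zero e r hϖ he1 _ ?_
    intro x
    rw [Pi.sub_apply, map_sub, hφw, sub_self]
  exact le_antisymm le_top key

include hϖ hϖ0 in
lemma bijective_iff_isUnit_det (φ : MM R e r →ₗ[R] MM R e r) :
    Bijective φ ↔ IsUnit (redMat e r he1 φ).det := by
  haveI : ∀ x : Idx' r, Finite (R ⧸ (maximalIdeal R ^ e x.1 : Ideal R)) :=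
    fun x => (finite_quot_and_card' hϖ _).1
  haveI : Finite (MM R e r) := by
    unfold MM
    infer_instance
  constructor
  · intro hb
    set ψ := (LinearEquiv.ofBijective φ hb).symm.toLinearMap with hψ
    have hcomp : φ ∘ₗ ψ = LinearMap.id := by
      refine LinearMap.ext fun m => ?_
      exact (LinearEquiv.ofBijective φ hb).apply_symm_apply m
    have h3 : redMat e r he1 φ * redMat e r he1 ψ = 1 := by
      rw [← redMat_mul, hcomp, redMat_id]
    have h4 := congrArg Matrix.det h3
    rw [Matrix.det_mul, Matrix.det_one] at h4
    exact IsUnit.of_mul_eq_one _ h4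
  · intro hu
    have hsurj := surjective_of_isUnit_det e r hϖ hϖ0 he1 φ hu
    exact ⟨Finite.injective_iff_surjective.mpr hsurj, hsurj⟩

include hϖ hϖ0 he1 in
lemma range_redHom (A : Matrix (Idx' r) (Idx' r) (ResidueField R)) :
    A ∈ Set.range (redMat e r he1) ↔ A.BlockTriangular (fun x => e x.1) := by
  constructor
  · rintro ⟨φ, rfl⟩
    exact redMat_bt e r hϖ hϖ0 he1 φ
  · intro hA
    exact ⟨phiOf e r hϖ A, redMat_phiOf e r hϖ hϖ0 he1 A hA⟩

end Surj


section Counting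
variable {ϖ : R} (hϖ : IsLocalRing.maximalIdeal R = Ideal.span {ϖ}) (hϖ0 : ϖ ≠ 0)
  (he1 : ∀ i, 1 ≤ e i)

noncomputable def redHom (he1 : ∀ i, 1 ≤ e i) :
    (MM R e r →ₗ[R] MM R e r) →+ Matrix (Idx' r) (Idx' r) (ResidueField R) :=
  AddMonoidHom.mk' (redMat e r he1) (redMat_add e r he1)

include hϖ hϖ0 he1 in
lemma aut_count :
    Nat.card {φ : MM R e r →ₗ[R] MM R e r // Bijective φ} *
      Nat.card {A : Matrix (Idx' r) (Idx' r) (ResidueField R) //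
        A.BlockTriangular (fun x => e x.1)} =
    Nat.card {A : Matrix (Idx' r) (Idx' r) (ResidueField R) //
        A.BlockTriangular (fun x => e x.1) ∧ IsUnit A.det} *
      Nat.card (MM R e r →ₗ[R] MM R e r) := by
  have hrange : ∀ A, A ∈ Set.range (redHom (R := R) e r he1) ↔
      A.BlockTriangular (fun x => e x.1) := fun A => range_redHom e r hϖ hϖ0 he1 A
  have h1 : Nat.card {φ : MM R e r →ₗ[R] MM R e r // Bijective φ} =
      Nat.card {A : Matrix (Idx' r) (Idx' r) (ResidueField R) //
        A.BlockTriangular (fun x => e x.1) ∧ IsUnit A.det} *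
      Nat.card (redHom (R := R) e r he1).ker := by
    rw [Nat.card_congr (Equiv.subtypeEquivRight
      (p := fun φ : MM R e r →ₗ[R] MM R e r => Bijective φ)
      (q := fun φ => IsUnit ((redHom (R := R) e r he1) φ).det)
      (fun φ => bijective_iff_isUnit_det e r hϖ hϖ0 he1 φ))]
    rw [card_preimage (redHom (R := R) e r he1) (fun A => IsUnit A.det)]
    congr 1
    refine Nat.card_congr (Equiv.subtypeEquivRight fun A => ?_)
    rw [hrange A]
  have h2 : Nat.card (MM R e r →ₗ[R] MM R e r) =
      Nat.card {A : Matrix (Idx' r) (Idx' r) (ResidueField R) //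
        A.BlockTriangular (fun x => e x.1)} * Nat.card (redHom (R := R) e r he1).ker := by
    rw [← Nat.card_congr (Equiv.subtypeUnivEquiv
      (fun φ : MM R e r →ₗ[R] MM R e r => trivial))]
    rw [card_preimage (redHom (R := R) e r he1) (fun _ => True)]
    congr 1
    refine Nat.card_congr (Equiv.subtypeEquivRight fun A => ?_)
    rw [hrange A]
    simp
  rw [h1, h2]
  ring

include hϖ hϖ0 he1 in
lemma end_card :
    Nat.card (MM R e r →ₗ[R] MM R e r) =
      ∏ x : Idx' r, ∏ y : Idx' r, Nat.card (ResidueField R) ^ min (e y.1) (e x.1) := by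
  have E1 : (MM R e r →ₗ[R] MM R e r) ≃
      ∀ x : Idx' r, (MM R e r →ₗ[R] (R ⧸ (maximalIdeal R ^ e x.1 : Ideal R))) :=
    { toFun := fun f x => LinearMap.comp
        (LinearMap.proj (R := R)
          (φ := fun x : Idx' r => R ⧸ (maximalIdeal R ^ e x.1 : Ideal R)) x) f
      invFun := fun g => LinearMap.pi g
      left_inv := fun f => rfl
      right_inv := fun g => rfl }
  rw [Nat.card_congr E1, Nat.card_pi]
  refine Finset.prod_congr rfl fun x _ => ?_
  have E2 : (MM R e r →ₗ[R] (R ⧸ (maximalIdeal R ^ e x.1 : Ideal R))) ≃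
      ∀ y : Idx' r, ((R ⧸ (maximalIdeal R ^ e y.1 : Ideal R)) →ₗ[R]
        (R ⧸ (maximalIdeal R ^ e x.1 : Ideal R))) :=
    (LinearMap.lsum R (fun y : Idx' r => R ⧸ (maximalIdeal R ^ e y.1 : Ideal R)) R).symm.toEquiv
  rw [Nat.card_congr E2, Nat.card_pi]
  refine Finset.prod_congr rfl fun y _ => ?_
  exact hom_card' hϖ (e y.1) (e x.1) hϖ0

end Counting
end Main




lemma prod_idx' {β : Type*} [CommMonoid β] {k : ℕ} (r : Fin k → ℕ) (h : Idx' r → β) :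
    ∏ x : Idx' r, h x = ∏ i, ∏ a : Fin (r i), h ⟨i, a⟩ := by
  rw [← Finset.univ_sigma_univ, Finset.prod_sigma]

lemma prod_idx_pair {β : Type*} [CommMonoid β] {k : ℕ} (r : Fin k → ℕ)
    (f : Fin k → Fin k → β) :
    (∏ x : Idx' r, ∏ y : Idx' r, f x.1 y.1) = ∏ i, ∏ j, (f i j) ^ (r i * r j) := by
  rw [prod_idx' r (fun x => ∏ y : Idx' r, f x.1 y.1)]
  refine Finset.prod_congr rfl fun i _ => ?_
  show ∏ _a : Fin (r i), ∏ y : Idx' r, f i y.1 = _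
  have hin : (∏ y : Idx' r, f i y.1) = ∏ j, (f i j) ^ (r j) := by
    rw [prod_idx' r (fun y => f i y.1)]
    refine Finset.prod_congr rfl fun j _ => ?_
    show ∏ _b : Fin (r j), f i j = _
    rw [Finset.prod_const, Finset.card_univ, Fintype.card_fin]
  rw [Finset.prod_congr rfl fun (_a : Fin (r i)) _ => hin, Finset.prod_const,
    Finset.card_univ, Fintype.card_fin, ← Finset.prod_pow]
  refine Finset.prod_congr rfl fun j _ => ?_
  rw [← pow_mul]
  congr 1
  ring

/-- The number of `R`-automorphisms of
`G ≃ (R/𝔪^{e_1})^{r_1} × ⋯ × (R/𝔪^{e_k})^{r_k}` over a complete DVR `R`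
with finite residue field of cardinality `q`. -/
theorem stmt_2 (R : Type) [CommRing R] [IsDomain R] [IsDiscreteValuationRing R]
    [IsAdicComplete (IsLocalRing.maximalIdeal R) R]
    [Finite (IsLocalRing.ResidueField R)]
    (q : ℕ) (hq : q = Nat.card (IsLocalRing.ResidueField R))
    (k : ℕ) (hk : 1 ≤ k) (e r : Fin k → ℕ)
    (he : ∀ i j : Fin k, i < j → e j < e i) (he1 : ∀ i, 1 ≤ e i) (hr1 : ∀ i, 1 ≤ r i)
    (G : Type) [AddCommGroup G] [Module R G]
    (hG : Nonempty (G ≃ₗ[R]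
      ((i : Fin k) → Fin (r i) → R ⧸ (IsLocalRing.maximalIdeal R ^ e i)))) :
    (Nat.card (G ≃ₗ[R] G) : ℚ) =
      (∏ i, ((q : ℚ) ^ ((r i) ^ 2))⁻¹ *
        (Nat.card (Matrix.GeneralLinearGroup (Fin (r i)) (IsLocalRing.ResidueField R)) : ℚ)) *
      ∏ i, ∏ j, (q : ℚ) ^ (min (e i) (e j) * r i * r j) := by
  classical
  obtain ⟨ϖ, hϖirr⟩ := IsDiscreteValuationRing.exists_irreducible R
  have hϖ : IsLocalRing.maximalIdeal R = Ideal.span {ϖ} :=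
    (IsDiscreteValuationRing.irreducible_iff_uniformizer ϖ).mp hϖirr
  have hϖ0 : ϖ ≠ 0 := hϖirr.ne_zero
  have hinj : Function.Injective e := by
    intro i j hij
    by_contra hne
    rcases Ne.lt_or_gt hne with h | h
    · exact (he i j h).ne hij.symm
    · exact (he j i h).ne hij
  -- transfer automorphism count to the standard module
  have E0 : (MM R e r) ≃ₗ[R]
      ((i : Fin k) → Fin (r i) → R ⧸ (IsLocalRing.maximalIdeal R ^ e i)) :=
    LinearEquiv.piCurry R
      (fun i (_ : Fin (r i)) => R ⧸ (IsLocalRing.maximalIdeal R ^ e i : Ideal R))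
  have g : G ≃ₗ[R] MM R e r := hG.some.trans E0.symm
  have hAut1 : Nat.card (G ≃ₗ[R] G) = Nat.card (MM R e r ≃ₗ[R] MM R e r) := by
    refine Nat.card_congr
      { toFun := fun f => (g.symm.trans f).trans g
        invFun := fun h => (g.trans h).trans g.symm
        left_inv := fun f => by
          refine LinearEquiv.ext fun x => ?_
          simp
        right_inv := fun h => by
          refine LinearEquiv.ext fun x => ?_
          simp }
  have hAut2 : Nat.card (MM R e r ≃ₗ[R] MM R e r) =
      Nat.card {φ : MM R e r →ₗ[R] MM R e r // Bijective φ} := by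
    refine Nat.card_congr
      { toFun := fun f => ⟨f.toLinearMap, f.bijective⟩
        invFun := fun φ => LinearEquiv.ofBijective φ.1 φ.2
        left_inv := fun f => by
          refine LinearEquiv.ext fun x => ?_
          rfl
        right_inv := fun φ => Subtype.ext rfl }
  rw [hAut1, hAut2]
  -- notation for the numbers involved
  set K := IsLocalRing.ResidueField R with hK
  set NF := Nat.card ({p : Idx' r × Idx' r // e p.1.1 < e p.2.1} → K) with hNF
  set NA := Nat.card {φ : MM R e r →ₗ[R] MM R e r // Bijective φ} with hNA
  set NE := Nat.card (MM R e r →ₗ[R] MM R e r) with hNE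
  set cBT := Nat.card {A : Matrix (Idx' r) (Idx' r) K //
      A.BlockTriangular (fun x => e x.1)} with hcBT
  set cBTU := Nat.card {A : Matrix (Idx' r) (Idx' r) K //
      A.BlockTriangular (fun x => e x.1) ∧ IsUnit A.det} with hcBTU
  have hq1 : 1 ≤ q := by
    rw [hq]
    exact Nat.one_le_iff_ne_zero.mpr (Nat.card_pos).ne'
  have hq0 : (q : ℚ) ≠ 0 := by
    exact_mod_cast Nat.one_le_iff_ne_zero.mp hq1
  -- cardinalities of matrix spaces
  have hMat : ∀ n : ℕ, Nat.card (Matrix (Fin n) (Fin n) K) = q ^ (n * n) := by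
    intro n
    have h1 : Nat.card (Matrix (Fin n) (Fin n) K) = Nat.card (Fin n → Fin n → K) :=
      Nat.card_congr (Equiv.refl _)
    have hfin : Nat.card (Fin n) = n := by simp [Nat.card_eq_fintype_card]
    rw [h1, Nat.card_fun, Nat.card_fun, hfin, ← hq, ← pow_mul]
  have hNF0 : NF ≠ 0 := by
    rw [hNF, Nat.card_fun, ← hq]
    exact pow_ne_zero _ (Nat.one_le_iff_ne_zero.mp hq1)
  -- main counting identity
  have F1 : NA * cBT = cBTU * NE := aut_count e r hϖ hϖ0 he1
  have F2 : cBT = (∏ i, q ^ (r i * r i)) * NF := by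
    rw [hcBT, card_bt' e r hinj]
    congr 1
    exact Finset.prod_congr rfl fun i _ => hMat (r i)
  have F3 : cBTU = (∏ i, Nat.card {B : Matrix (Fin (r i)) (Fin (r i)) K //
      IsUnit B.det}) * NF := card_bt_unit' e r hinj hr1
  have F4 : (NE : ℚ) = ∏ i, ∏ j, (q : ℚ) ^ (min (e i) (e j) * r i * r j) := by
    rw [hNE, end_card e r hϖ hϖ0 he1]
    push_cast
    rw [← hq]
    rw [prod_idx_pair r (fun a b => (q : ℚ) ^ min (e b) (e a))]
    refine Finset.prod_congr rfl fun i _ => ?_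
    refine Finset.prod_congr rfl fun j _ => ?_
    rw [← pow_mul, min_comm]
    congr 1
    ring
  have hBT0 : (cBT : ℚ) ≠ 0 := by
    rw [F2]
    push_cast
    refine mul_ne_zero ?_ ?_
    · refine Finset.prod_ne_zero_iff.mpr fun i _ => ?_
      exact pow_ne_zero _ hq0
    · exact_mod_cast hNF0
  have key : (NA : ℚ) = (cBTU : ℚ) * NE / cBT := by
    rw [eq_div_iff hBT0]
    exact_mod_cast F1
  rw [key, F4]
  have F3' : (cBTU : ℚ) = (∏ i, (Nat.card (Matrix.GeneralLinearGroup (Fin (r i)) K) : ℚ)) *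
      NF := by
    rw [F3]
    push_cast
    congr 1
    exact Finset.prod_congr rfl fun i _ => by rw [card_gl_eq' (r i)]
  rw [F3']
  have F2' : (cBT : ℚ) = (∏ i, (q : ℚ) ^ (r i ^ 2)) * NF := by
    rw [F2]
    push_cast
    congr 1
    refine Finset.prod_congr rfl fun i _ => ?_
    rw [pow_two]
  rw [F2']
  rw [Finset.prod_mul_distrib]
  have hprodinv : ∏ i, (((q : ℚ) ^ (r i ^ 2))⁻¹) = (∏ i, (q : ℚ) ^ (r i ^ 2))⁻¹ := by
    rw [← Finset.prod_inv_distrib]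
  rw [hprodinv]
  have hP0 : (∏ i, (q : ℚ) ^ (r i ^ 2)) ≠ 0 :=
    Finset.prod_ne_zero_iff.mpr fun i _ => pow_ne_zero _ hq0
  have hNF0' : (NF : ℚ) ≠ 0 := by exact_mod_cast hNF0
  field_simp
  ring
end

section
/- Let $p$ be prime, $N \geq 0$, and let $J_1, \dots, J_l, M$ be square matrices over $\mathbb{Z}/p^{N+1}\mathbb{Z}$ of sizes $n_1, \dots, n_l, n_{l+1}$ with $n = n_1 + \cdots + n_{l+1}$. Let $R_j = (\mathbb{Z}/p^{N+1}\mathbb{Z})[t]/(P_j(t))$ for monic $P_j$, and suppose for $i \neq j$ that $J_i - \bar{t}\,\mathrm{id}$ and $M - \bar{t}\,\mathrm{id}$ are invertible over $R_j$. Then for any matrix $X$ over $\mathbb{Z}/p^{N+1}\mathbb{Z}$ whose block decomposition is $X = D + pE$ with $D = \mathrm{diag}(J_1, \dots, J_l, M)$ and $E$ arbitrary, there exist invertible matrices over $R_j$ transforming $X - \bar{t}I_n$ into a block diagonal matrix whose $j$-th block is $pA_{jj} + J_j - \bar{t}\,\mathrm{id} + p^2 B + \bar{t} p^2 C$ for some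 matrices $B, C$ over $\mathbb{Z}/p^{N+1}\mathbb{Z}$, and whose other blocks are invertible over $R_j$; consequently $\mathrm{cok}_{R_j}(X - \bar{t}I_n) \simeq \mathrm{cok}_{R_j}(pA_{jj} + J_j - \bar{t}\,\mathrm{id} + p^2 B + \bar{t}p^2 C)$. -/
/-!
Write `S = ℤ/p^{N+1}`, `R = S[t]/(P_j) = S[τ]` and `Y = X - τ`. In block form with respect to
the `j`-th index block and its complement, the complement block of `Y` is
`diag(J_k - τ)_{k ≠ j} + pE`, a unit plus a nilpotent multiple, hence invertible, and the
off-diagonal blocks are multiples of `p`. Block elimination therefore leaves the Schur complement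
`A - τ + p²G` in the `j`-th slot, with `A = J_j + pE_jj` over `S` but `G` over `R`.

To push `G` back to `S`: since `R` is generated by `τ` over `S`, every matrix over `R` has the form
`(τ - A)L + c` with `c` over `S`. Writing `G` this way, right multiplication by the unit
`1 + p^m L` turns `A - τ + p^m G` into `(A + p^m c) - τ + p^{2m} GL`; iterating until `p^m = 0`
yields `A' - τ` with `A' ≡ A mod p²` over `S` (so one may take `C = 0`).
-/

open Matrix

theorem IsUnit.add_smul_of_isNilpotent {S A : Type*} [CommRing S] [Ring A] [Algebra S A]
    {u : A} (hu : IsUnit u) {π : S} (hπ : IsNilpotent π) (x : A) : IsUnit (u + π • x) := by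
  obtain ⟨u, rfl⟩ := hu
  have hfactor : (u : A) + π • x = u * (1 + algebraMap S A π * (↑u⁻¹ * x)) := by
    rw [mul_add, mul_one, Algebra.smul_def, ← mul_assoc, ← Algebra.commutes, mul_assoc,
      Units.mul_inv_cancel_left]
  rw [hfactor]
  exact u.isUnit.mul
    ((Algebra.commute_algebraMap_left π _).isNilpotent_mul_right (hπ.map _)).isUnit_one_add

theorem Matrix.map_algebraMap_smul {S R : Type*} [CommRing S] [CommRing R] [Algebra S R]
    {m n : Type*} (c : S) (A : Matrix m n S) :
    (c • A).map (algebraMap S R) = c • A.map (algebraMap S R) :=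
  Matrix.map_smul _ c (fun a => map_smul (Algebra.linearMap S R) c a) A

section Reduction

variable {S R : Type*} [CommRing S] [CommRing R] [Algebra S R] {n : Type*} [Fintype n]
  [DecidableEq n]

theorem Matrix.exists_eq_smul_one_sub_mul_add_map {τ : R} (hτ : Algebra.adjoin S {τ} = ⊤)
    (K : Matrix n n S) (G : Matrix n n R) :
    ∃ (L : Matrix n n R) (c : Matrix n n S),
      G = (τ • 1 - K.map (algebraMap S R)) * L + c.map (algebraMap S R) := by
  set T := τ • (1 : Matrix n n R) - K.map (algebraMap S R)
  let V : Submodule R (Matrix n n R) :=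
    { carrier := {G | ∃ (L : Matrix n n R) (c : Matrix n n S), G = T * L + c.map (algebraMap S R)}
      add_mem' := by
        rintro _ _ ⟨L, c, rfl⟩ ⟨L', c', rfl⟩
        exact ⟨L + L', c + c', by rw [mul_add, Matrix.map_add _ (map_add _)]; abel⟩
      zero_mem' := ⟨0, 0, by simp⟩
      smul_mem' := by
        intro r
        have hr : r ∈ Algebra.adjoin S {τ} := hτ ▸ Algebra.mem_top
        induction hr using Algebra.adjoin_induction with
        | mem x hx =>
          rw [Set.mem_singleton_iff.mp hx]
          rintro _ ⟨L, c, rfl⟩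
          -- `τ • c = T * c + K * c`
          refine ⟨τ • L + c.map (algebraMap S R), K * c, ?_⟩
          simp only [T, Matrix.map_mul, mul_add, smul_add, mul_smul_comm, sub_mul, smul_mul_assoc,
            one_mul]
          abel
        | algebraMap s =>
          rintro _ ⟨L, c, rfl⟩
          refine ⟨s • L, s • c, ?_⟩
          rw [smul_add, algebraMap_smul, algebraMap_smul, mul_smul_comm, map_algebraMap_smul]
        | add x y _ _ hx hy =>
          rintro G hG
          obtain ⟨L, c, hL⟩ := hx hG
          obtain ⟨L', c', hL'⟩ := hy hG
          refine ⟨L + L', c + c', ?_⟩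
          rw [add_smul, hL, hL', mul_add, Matrix.map_add _ (map_add _)]
          abel
        | mul x y _ _ hx hy =>
          intro G hG
          rw [mul_smul]
          exact hx (hy hG) }
  have hsingle : ∀ i j, Matrix.single i j (1 : R) ∈ V := fun i j =>
    ⟨0, Matrix.single i j 1, by rw [Matrix.map_single, map_one, mul_zero, zero_add]⟩
  change G ∈ V
  rw [matrix_eq_sum_single G]
  refine Submodule.sum_mem _ fun i _ => Submodule.sum_mem _ fun j _ => ?_
  simpa [Matrix.smul_single] using V.smul_mem (G i j) (hsingle i j)

theorem Matrix.exists_isUnit_mul_eq_map_sub {τ : R} (hτ : Algebra.adjoin S {τ} = ⊤) {p : S}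
    (hp : IsNilpotent p) {m : ℕ} (hm : 1 ≤ m) (A : Matrix n n S) (G : Matrix n n R) :
    ∃ (B : Matrix n n S) (v : Matrix n n R), IsUnit v ∧
      (A.map (algebraMap S R) - τ • 1 + p ^ m • G) * v
        = (A + p ^ m • B).map (algebraMap S R) - τ • 1 := by
  have hmap : ∀ (A B : Matrix n n S) (k : ℕ), (A + p ^ k • B).map (algebraMap S R)
      = A.map (algebraMap S R) + p ^ k • B.map (algebraMap S R) := fun A B k => by
    rw [Matrix.map_add _ (map_add _), map_algebraMap_smul]
  obtain ⟨ν, hν⟩ := id hp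
  obtain ⟨k, hk⟩ : ∃ k, ν ≤ m + k := ⟨ν, by omega⟩
  induction k generalizing m A G with
  | zero =>
    have hpm : p ^ m = 0 := pow_eq_zero_of_le (by omega) hν
    exact ⟨0, 1, isUnit_one, by simp [hpm]⟩
  | succ k ih =>
    obtain ⟨L, c, hG⟩ := exists_eq_smul_one_sub_mul_add_map hτ A G
    obtain ⟨B, v, hv, hB⟩ := ih (m := 2 * m) (by omega) (A + p ^ m • c) (G * L) (by omega)
    refine ⟨c + p ^ m • B, (1 + p ^ m • L) * v,
      (isUnit_one.add_smul_of_isNilpotent (hp.pow_of_pos (by omega)) L).mul hv, ?_⟩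
    set K := A.map (algebraMap S R)
    have hcancel : G + (K - τ • 1) * L = c.map (algebraMap S R) := by
      rw [hG, sub_mul, sub_mul]
      abel
    have hstep : (K - τ • 1 + p ^ m • G) * (1 + p ^ m • L)
        = (A + p ^ m • c).map (algebraMap S R) - τ • 1 + p ^ (2 * m) • (G * L) := by
      rw [hmap, ← hcancel]
      simp only [mul_add, add_mul, mul_one, smul_mul_assoc, mul_smul_comm, smul_smul, ← pow_add,
        two_mul, smul_add]
      abel
    rw [← mul_assoc, hstep, hB, smul_add, smul_smul, ← pow_add, ← two_mul, add_assoc]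

end Reduction

namespace Matrix

section Equivalence

variable {R : Type*} [CommRing R] {α β : Type*} [Fintype α] [Fintype β] [DecidableEq α]
  [DecidableEq β]

theorem exists_isUnit_mul_fromBlocks_mul_eq (A : Matrix α α R) (B : Matrix α β R)
    (C : Matrix β α R) {D : Matrix β β R} (hD : IsUnit D) :
    ∃ U V : Matrix (α ⊕ β) (α ⊕ β) R, IsUnit U ∧ IsUnit V ∧
      U * fromBlocks A B C D * V = fromBlocks (A - B * D⁻¹ * C) 0 0 1 := by
  let := D.invertibleOfIsUnitDet ((isUnit_iff_isUnit_det D).mp hD)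
  set P : Matrix (α ⊕ β) (α ⊕ β) R := fromBlocks 1 (B * ⅟D) 0 1 * fromBlocks 1 0 0 D
  set Q : Matrix (α ⊕ β) (α ⊕ β) R := fromBlocks 1 0 (⅟D * C) 1
  have hP : IsUnit P.det := by
    simpa [P, det_fromBlocks_zero₂₁, ← isUnit_iff_isUnit_det] using hD
  have hQ : IsUnit Q.det := by
    simp [Q]
  have hfactor : fromBlocks A B C D = P * fromBlocks (A - B * D⁻¹ * C) 0 0 1 * Q := by
    rw [fromBlocks_eq_of_invertible₂₂, invOf_eq_nonsing_inv]
    simp [P, Q, fromBlocks_multiply]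
  refine ⟨P⁻¹, Q⁻¹, isUnit_nonsing_inv_iff.mpr ((isUnit_iff_isUnit_det _).mpr hP),
    isUnit_nonsing_inv_iff.mpr ((isUnit_iff_isUnit_det _).mpr hQ), ?_⟩
  rw [hfactor, ← mul_assoc, ← mul_assoc, nonsing_inv_mul _ hP, one_mul, mul_assoc,
    mul_nonsing_inv _ hQ, mul_one]

theorem exists_isUnit_mul_mul_eq_of_submatrix (e : α ≃ β) {M N : Matrix β β R}
    {U V : Matrix α α R} (hU : IsUnit U) (hV : IsUnit V)
    (h : U * M.submatrix e e * V = N.submatrix e e) :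
    ∃ U V : Matrix β β R, IsUnit U ∧ IsUnit V ∧ U * M * V = N := by
  refine ⟨U.submatrix e.symm e.symm, V.submatrix e.symm e.symm,
    (isUnit_submatrix_equiv _ _).mpr hU, (isUnit_submatrix_equiv _ _).mpr hV, ?_⟩
  have := congrArg (·.submatrix e.symm e.symm) h
  rw [← submatrix_mul_equiv (e₂ := e.symm), ← submatrix_mul_equiv (e₂ := e.symm)] at this
  simpa only [submatrix_submatrix, Equiv.self_comp_symm, submatrix_id_id] using this

end Equivalence

section Cokernel

variable {R : Type*} [CommRing R] {α β : Type*} [Fintype α] [Fintype β]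

abbrev cok (M : Matrix α α R) : Type _ := (α → R) ⧸ LinearMap.range M.mulVecLin

noncomputable def cokEquivOfMulMul [DecidableEq α] {M N U V : Matrix α α R} (hU : IsUnit U)
    (hV : IsUnit V) (h : U * M * V = N) : M.cok ≃ₗ[R] N.cok :=
  Submodule.Quotient.equiv _ _ (U.toLinearEquiv' hU.invertible) <| by
    have hVtop : LinearMap.range V.mulVecLin = ⊤ :=
      LinearMap.range_eq_top.mpr (mulVec_surjective_iff_isUnit.mpr hV)
    rw [← h, mulVecLin_mul, mulVecLin_mul, LinearMap.range_comp_of_range_eq_top _ hVtop,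
      LinearMap.range_comp]
    rfl

noncomputable def cokSubmatrixEquiv (e : α ≃ β) (M : Matrix β β R) :
    M.cok ≃ₗ[R] (M.submatrix e e).cok :=
  Submodule.Quotient.equiv _ _ (LinearEquiv.funCongrLeft R R e) <| by
    have hconj : (M.submatrix e e).mulVecLin = (LinearEquiv.funCongrLeft R R e).toLinearMap ∘ₗ
        M.mulVecLin ∘ₗ (LinearEquiv.funCongrLeft R R e).symm.toLinearMap :=
      LinearMap.ext fun x => submatrix_mulVec_equiv M x e e
    rw [hconj, LinearMap.range_comp, LinearMap.range_comp_of_range_eq_top _ (LinearEquiv.range _)]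

variable [DecidableEq β]

theorem range_mulVecLin_fromBlocks_one (Z : Matrix α α R) :
    LinearMap.range (fromBlocks Z 0 0 (1 : Matrix β β R)).mulVecLin
      = (LinearMap.range Z.mulVecLin).comap (LinearMap.funLeft R R Sum.inl) := by
  ext x
  simp only [LinearMap.mem_range, Submodule.mem_comap, mulVecLin_apply]
  constructor
  · rintro ⟨w, rfl⟩
    exact ⟨w ∘ Sum.inl, funext fun a => by simp [fromBlocks_mulVec]⟩
  · rintro ⟨y, hy⟩
    refine ⟨Sum.elim y (x ∘ Sum.inr), funext fun i => ?_⟩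
    rcases i with a | b
    · simpa [fromBlocks_mulVec] using congrFun hy a
    · simp [fromBlocks_mulVec]

noncomputable def cokFromBlocksOneEquiv (Z : Matrix α α R) :
    (fromBlocks Z 0 0 (1 : Matrix β β R)).cok ≃ₗ[R] Z.cok :=
  let φ := (LinearMap.range Z.mulVecLin).mkQ ∘ₗ LinearMap.funLeft R R (Sum.inl : α → α ⊕ β)
  have hker :
      LinearMap.ker φ = LinearMap.range (fromBlocks Z 0 0 (1 : Matrix β β R)).mulVecLin := by
    rw [range_mulVecLin_fromBlocks_one, LinearMap.ker_comp, Submodule.ker_mkQ]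
  (Submodule.quotEquivOfEq _ _ hker.symm).trans <| φ.quotKerEquivOfSurjective <|
    (Submodule.mkQ_surjective _).comp
      (LinearMap.funLeft_surjective_of_injective R R _ Sum.inl_injective)

end Cokernel

end Matrix

section SigmaBlocks

variable {κ : Type*} [DecidableEq κ] {n : κ → Type*}

def Equiv.sumSigmaCompl (j : κ) : n j ⊕ {s : Σ k, n k // s.1 ≠ j} ≃ Σ k, n k :=
  (Equiv.sumCongr (Equiv.sigmaSubtype j).symm (Equiv.refl _)).trans
    (Equiv.sumCompl fun s : Σ k, n k => s.1 = j)

namespace Matrix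

theorem eq_blockDiagonal' {R : Type*} [Zero R] {M : Matrix (Σ k, n k) (Σ k, n k) R}
    {F : (k : κ) → Matrix (n k) (n k) R} (hdiag : ∀ k a b, M ⟨k, a⟩ ⟨k, b⟩ = F k a b)
    (hoff : ∀ k k', k ≠ k' → ∀ a b, M ⟨k, a⟩ ⟨k', b⟩ = 0) : M = blockDiagonal' F := by
  ext ⟨k, a⟩ ⟨k', b⟩
  rcases eq_or_ne k k' with rfl | hk
  · rw [hdiag, blockDiagonal'_apply_eq]
  · rw [hoff k k' hk, blockDiagonal'_apply_ne _ _ _ hk]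

theorem blockDiagonal'_submatrix_sumSigmaCompl {R : Type*} [Zero R]
    (F : (k : κ) → Matrix (n k) (n k) R) (j : κ) :
    (blockDiagonal' F).submatrix (Equiv.sumSigmaCompl j) (Equiv.sumSigmaCompl j)
      = fromBlocks (F j) 0 0 ((blockDiagonal' F).toBlock (·.1 ≠ j) (·.1 ≠ j)) := by
  ext (a | s) (b | s')
  · exact blockDiagonal'_apply_eq F j a b
  · exact blockDiagonal'_apply_ne F _ _ (Ne.symm s'.2)
  · exact blockDiagonal'_apply_ne F _ _ s.2
  · rfl

theorem blockDiagonal'_update_toBlock {R : Type*} [Zero R] (F : (k : κ) → Matrix (n k) (n k) R)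
    (j : κ) (Z : Matrix (n j) (n j) R) :
    (blockDiagonal' (Function.update F j Z)).toBlock (·.1 ≠ j) (·.1 ≠ j)
      = (blockDiagonal' F).toBlock (·.1 ≠ j) (·.1 ≠ j) := by
  ext ⟨⟨k, a⟩, hk⟩ ⟨⟨k', b⟩, hk'⟩
  simp [toBlock_apply, blockDiagonal'_apply, Function.update_of_ne hk]

theorem blockDiagonal'_add_smul_submatrix_sumSigmaCompl {S R : Type*} [AddZeroClass R]
    [SMul S R] (F : (k : κ) → Matrix (n k) (n k) R) (c : S) (M : Matrix (Σ k, n k) (Σ k, n k) R)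
    (j : κ) :
    (blockDiagonal' F + c • M).submatrix (Equiv.sumSigmaCompl j) (Equiv.sumSigmaCompl j)
      = fromBlocks
          (F j + c • (M.submatrix (Equiv.sumSigmaCompl j) (Equiv.sumSigmaCompl j)).toBlocks₁₁)
          (c • (M.submatrix (Equiv.sumSigmaCompl j) (Equiv.sumSigmaCompl j)).toBlocks₁₂)
          (c • (M.submatrix (Equiv.sumSigmaCompl j) (Equiv.sumSigmaCompl j)).toBlocks₂₁)
          ((blockDiagonal' F).toBlock (·.1 ≠ j) (·.1 ≠ j)
            + c • (M.submatrix (Equiv.sumSigmaCompl j) (Equiv.sumSigmaCompl j)).toBlocks₂₂) := by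
  set M' := M.submatrix (Equiv.sumSigmaCompl j) (Equiv.sumSigmaCompl j)
  have hsplit : (blockDiagonal' F + c • M).submatrix (Equiv.sumSigmaCompl j)
      (Equiv.sumSigmaCompl j) = (blockDiagonal' F).submatrix (Equiv.sumSigmaCompl j)
        (Equiv.sumSigmaCompl j) + c • M' := rfl
  rw [hsplit, blockDiagonal'_submatrix_sumSigmaCompl]
  conv_lhs => rw [← fromBlocks_toBlocks M', fromBlocks_smul, fromBlocks_add]
  simp only [zero_add]

variable {R : Type*} [CommRing R] [∀ k, DecidableEq (n k)]

theorem blockDiagonal'_update_one_submatrix_sumSigmaCompl (j : κ) (Z : Matrix (n j) (n j) R) :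
    (blockDiagonal' (Function.update 1 j Z)).submatrix (Equiv.sumSigmaCompl j)
      (Equiv.sumSigmaCompl j) = fromBlocks Z 0 0 1 := by
  rw [blockDiagonal'_submatrix_sumSigmaCompl, blockDiagonal'_update_toBlock, Function.update_self,
    blockDiagonal'_one, toBlock_one_self]

variable [Fintype κ] [∀ k, Fintype (n k)]

theorem isUnit_blockDiagonal'_toBlock_ne (F : (k : κ) → Matrix (n k) (n k) R) (j : κ)
    (hF : ∀ k ≠ j, IsUnit (F k)) :
    IsUnit ((blockDiagonal' F).toBlock (·.1 ≠ j) (·.1 ≠ j)) := by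
  have hunit : IsUnit (blockDiagonal' (Function.update F j 1)) := by
    refine (Pi.isUnit_iff.mpr fun k => ?_).map (blockDiagonal'RingHom n R)
    rcases eq_or_ne k j with rfl | hk
    · simp
    · simpa [Function.update_of_ne hk] using hF k hk
  rw [← isUnit_submatrix_equiv (Equiv.sumSigmaCompl j) (Equiv.sumSigmaCompl j),
    blockDiagonal'_submatrix_sumSigmaCompl, blockDiagonal'_update_toBlock, isUnit_iff_isUnit_det,
    det_fromBlocks_zero₂₁, Function.update_self, det_one, one_mul,
    ← isUnit_iff_isUnit_det] at hunit
  exact hunit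

end Matrix

end SigmaBlocks

theorem Matrix.exists_isUnit_mul_submatrix_mul_eq_fromBlocks {S R : Type*} [CommRing S]
    [CommRing R] [Algebra S R] {κ : Type*} [Fintype κ] [DecidableEq κ] {n : κ → Type*}
    [∀ k, Fintype (n k)] [∀ k, DecidableEq (n k)] {τ : R}
    (hτ : Algebra.adjoin S {τ} = ⊤) {p : S} (hp : IsNilpotent p)
    (J : (k : κ) → Matrix (n k) (n k) S) (j : κ)
    (hJ : ∀ k ≠ j, IsUnit ((J k).map (algebraMap S R) - τ • 1))
    (E : Matrix (Σ k, n k) (Σ k, n k) S) :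
    ∃ (B : Matrix (n j) (n j) S) (U V : Matrix (n j ⊕ {s : Σ k, n k // s.1 ≠ j})
        (n j ⊕ {s : Σ k, n k // s.1 ≠ j}) R), IsUnit U ∧ IsUnit V ∧
      U * ((blockDiagonal' J + p • E).map (algebraMap S R) - τ • 1).submatrix
          (Equiv.sumSigmaCompl j) (Equiv.sumSigmaCompl j) * V
        = fromBlocks ((J j + p • E.submatrix (Sigma.mk j) (Sigma.mk j) + p ^ 2 • B).map
            (algebraMap S R) - τ • 1) 0 0 1 := by
  set e := Equiv.sumSigmaCompl (n := n) j
  set F := fun k => (J k).map (algebraMap S R) - τ • 1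
  set E' := (E.map (algebraMap S R)).submatrix e e
  set D := (blockDiagonal' F).toBlock (·.1 ≠ j) (·.1 ≠ j) + p • E'.toBlocks₂₂
  have hY : ((blockDiagonal' J + p • E).map (algebraMap S R) - τ • 1).submatrix e e
      = fromBlocks (F j + p • E'.toBlocks₁₁) (p • E'.toBlocks₁₂) (p • E'.toBlocks₂₁) D := by
    rw [← blockDiagonal'_add_smul_submatrix_sumSigmaCompl, Matrix.map_add _ (map_add _),
      map_algebraMap_smul, blockDiagonal'_map _ _ (map_zero _), ← blockDiagonal'_one,
      ← blockDiagonal'_smul, add_sub_right_comm, ← blockDiagonal'_sub]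
    rfl
  have hD : IsUnit D :=
    (isUnit_blockDiagonal'_toBlock_ne F j hJ).add_smul_of_isNilpotent hp _
  obtain ⟨U, V, hU, hV, hUV⟩ := exists_isUnit_mul_fromBlocks_mul_eq
    (F j + p • E'.toBlocks₁₁) (p • E'.toBlocks₁₂) (p • E'.toBlocks₂₁) hD
  have hschur : F j + p • E'.toBlocks₁₁ - p • E'.toBlocks₁₂ * D⁻¹ * p • E'.toBlocks₂₁
      = (J j + p • E.submatrix (Sigma.mk j) (Sigma.mk j)).map (algebraMap S R) - τ • 1
        + p ^ 2 • -(E'.toBlocks₁₂ * D⁻¹ * E'.toBlocks₂₁) := by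
    have h11 : E'.toBlocks₁₁ = (E.submatrix (Sigma.mk j) (Sigma.mk j)).map (algebraMap S R) :=
      rfl
    rw [Matrix.map_add _ (map_add _), map_algebraMap_smul, ← h11, Matrix.smul_mul,
      Matrix.smul_mul, Matrix.mul_smul, smul_smul, ← pow_two, smul_neg]
    simp only [F]
    abel
  obtain ⟨B, v, hv, hBv⟩ := exists_isUnit_mul_eq_map_sub hτ hp (m := 2) (by norm_num)
    (J j + p • E.submatrix (Sigma.mk j) (Sigma.mk j)) (-(E'.toBlocks₁₂ * D⁻¹ * E'.toBlocks₂₁))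
  refine ⟨B, U, V * fromBlocks v 0 0 1, hU, hV.mul ?_, ?_⟩
  · rwa [isUnit_iff_isUnit_det, det_fromBlocks_zero₂₁, det_one, mul_one,
      ← isUnit_iff_isUnit_det]
  · rw [← mul_assoc, hY, hUV, hschur, fromBlocks_multiply, ← hBv]
    simp

theorem stmt_18_general (p : ℕ) (N : ℕ) (l : ℕ)
    (nn : Fin (l + 1) → ℕ)
    (J : (k : Fin (l + 1)) → Matrix (Fin (nn k)) (Fin (nn k)) (ZMod (p ^ (N + 1))))
    (Pj : Polynomial (ZMod (p ^ (N + 1))))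
    (j : Fin (l + 1))
    (hinv : ∀ k, k ≠ j → IsUnit
      ((J k).map (algebraMap (ZMod (p ^ (N + 1))) (AdjoinRoot Pj)) - AdjoinRoot.root Pj • 1))
    (D E X : Matrix ((k : Fin (l + 1)) × Fin (nn k)) ((k : Fin (l + 1)) × Fin (nn k))
      (ZMod (p ^ (N + 1))))
    (hD1 : ∀ (k : Fin (l + 1)) (a b : Fin (nn k)), D ⟨k, a⟩ ⟨k, b⟩ = J k a b)
    (hD2 : ∀ (k k' : Fin (l + 1)), k ≠ k' → ∀ (a : Fin (nn k)) (b : Fin (nn k')),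
      D ⟨k, a⟩ ⟨k', b⟩ = 0)
    (hX : X = D + (p : ZMod (p ^ (N + 1))) • E) :
    ∃ (B C : Matrix (Fin (nn j)) (Fin (nn j)) (ZMod (p ^ (N + 1)))),
      ∃ (Z : Matrix (Fin (nn j)) (Fin (nn j)) (AdjoinRoot Pj)),
      Z = (J j + (p : ZMod (p ^ (N + 1))) •
            (Matrix.of fun a b => E ⟨j, a⟩ ⟨j, b⟩)).map
              (algebraMap (ZMod (p ^ (N + 1))) (AdjoinRoot Pj))
          - AdjoinRoot.root Pj • 1
          + ((p : AdjoinRoot Pj) ^ 2) • B.map (algebraMap (ZMod (p ^ (N + 1))) (AdjoinRoot Pj))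
          + AdjoinRoot.root Pj • (((p : AdjoinRoot Pj) ^ 2) •
              C.map (algebraMap (ZMod (p ^ (N + 1))) (AdjoinRoot Pj))) ∧
      ∃ (W U V : Matrix ((k : Fin (l + 1)) × Fin (nn k)) ((k : Fin (l + 1)) × Fin (nn k))
          (AdjoinRoot Pj)),
        IsUnit U ∧ IsUnit V ∧
        U * (X.map (algebraMap (ZMod (p ^ (N + 1))) (AdjoinRoot Pj))
          - AdjoinRoot.root Pj • 1) * V = W ∧
        (∀ (k k' : Fin (l + 1)), k ≠ k' → ∀ (a : Fin (nn k)) (b : Fin (nn k')),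
          W ⟨k, a⟩ ⟨k', b⟩ = 0) ∧
        (∀ a b : Fin (nn j), W ⟨j, a⟩ ⟨j, b⟩ = Z a b) ∧
        (∀ k, k ≠ j → IsUnit (Matrix.of fun a b : Fin (nn k) => W ⟨k, a⟩ ⟨k, b⟩)) ∧
        Nonempty (((((k : Fin (l + 1)) × Fin (nn k)) → AdjoinRoot Pj) ⧸
            LinearMap.range (X.map (algebraMap (ZMod (p ^ (N + 1))) (AdjoinRoot Pj))
              - AdjoinRoot.root Pj • 1).mulVecLin) ≃ₗ[AdjoinRoot Pj]
          ((Fin (nn j) → AdjoinRoot Pj) ⧸ LinearMap.range Z.mulVecLin)) := by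
  have hp : IsNilpotent (p : ZMod (p ^ (N + 1))) :=
    ⟨N + 1, by rw [← Nat.cast_pow, ZMod.natCast_self]⟩
  obtain ⟨B, U', V', hU', hV', hreduce⟩ := exists_isUnit_mul_submatrix_mul_eq_fromBlocks
    AdjoinRoot.adjoinRoot_eq_top hp J j hinv E
  rw [← eq_blockDiagonal' hD1 hD2, ← hX] at hreduce
  set Z := (J j + (p : ZMod (p ^ (N + 1))) • Matrix.of (fun a b => E ⟨j, a⟩ ⟨j, b⟩)
    + (p : ZMod (p ^ (N + 1))) ^ 2 • B).map (algebraMap _ (AdjoinRoot Pj))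
      - AdjoinRoot.root Pj • 1 with hZ
  set W := blockDiagonal' (Function.update
    (1 : (k : Fin (l + 1)) → Matrix (Fin (nn k)) (Fin (nn k)) (AdjoinRoot Pj)) j Z)
  obtain ⟨U, V, hU, hV, hUV⟩ := exists_isUnit_mul_mul_eq_of_submatrix _ hU' hV'
    (hreduce.trans
      (blockDiagonal'_update_one_submatrix_sumSigmaCompl (n := fun k => Fin (nn k)) j Z).symm)
  refine ⟨B, 0, Z, ?_, W, U, V, hU, hV, hUV, fun k k' hk a b => blockDiagonal'_apply_ne _ _ _ hk,
    fun a b => by simp [W, blockDiagonal'_apply_eq], fun k hk => ?_,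
    ⟨(cokSubmatrixEquiv _ _).trans ((cokEquivOfMulMul hU' hV' hreduce).trans
      (cokFromBlocksOneEquiv Z))⟩⟩
  · rw [Matrix.map_zero _ (map_zero _), smul_zero, smul_zero, add_zero, hZ,
      Matrix.map_add _ (map_add _), map_algebraMap_smul,
      ← map_natCast (algebraMap (ZMod (p ^ (N + 1))) (AdjoinRoot Pj)), ← map_pow, algebraMap_smul,
      sub_add_eq_add_sub]
  · convert isUnit_one
    ext a b
    simp [W, blockDiagonal'_apply_eq, Function.update_of_ne hk]

/-- Block diagonalization over `R_j = (ℤ/p^{N+1})[t]/(P_j)`: if `X = D + pE` with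
`D = diag(J_1, …, J_l, M)` and all diagonal blocks except the `j`-th become
invertible over `R_j` after subtracting `t̄·id`, then `X - t̄ Iₙ` can be transformed
by invertible matrices over `R_j` into a block diagonal matrix whose `j`-th block is
`pA_{jj} + J_j - t̄·id + p²B + t̄p²C` and whose other blocks are invertible; hence
the two cokernels over `R_j` are isomorphic. -/
theorem stmt_18 (p : ℕ) [Fact p.Prime] (N : ℕ) (l : ℕ)
    (nn : Fin (l + 1) → ℕ)
    (J : (k : Fin (l + 1)) → Matrix (Fin (nn k)) (Fin (nn k)) (ZMod (p ^ (N + 1))))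
    (Pj : Polynomial (ZMod (p ^ (N + 1)))) (hPj : Pj.Monic)
    (j : Fin (l + 1))
    (hinv : ∀ k, k ≠ j → IsUnit
      ((J k).map (algebraMap (ZMod (p ^ (N + 1))) (AdjoinRoot Pj)) - AdjoinRoot.root Pj • 1))
    (D E X : Matrix ((k : Fin (l + 1)) × Fin (nn k)) ((k : Fin (l + 1)) × Fin (nn k))
      (ZMod (p ^ (N + 1))))
    (hD1 : ∀ (k : Fin (l + 1)) (a b : Fin (nn k)), D ⟨k, a⟩ ⟨k, b⟩ = J k a b)
    (hD2 : ∀ (k k' : Fin (l + 1)), k ≠ k' → ∀ (a : Fin (nn k)) (b : Fin (nn k')),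
      D ⟨k, a⟩ ⟨k', b⟩ = 0)
    (hX : X = D + (p : ZMod (p ^ (N + 1))) • E) :
    ∃ (B C : Matrix (Fin (nn j)) (Fin (nn j)) (ZMod (p ^ (N + 1)))),
      ∃ (Z : Matrix (Fin (nn j)) (Fin (nn j)) (AdjoinRoot Pj)),
      Z = (J j + (p : ZMod (p ^ (N + 1))) •
            (Matrix.of fun a b => E ⟨j, a⟩ ⟨j, b⟩)).map
              (algebraMap (ZMod (p ^ (N + 1))) (AdjoinRoot Pj))
          - AdjoinRoot.root Pj • 1
          + ((p : AdjoinRoot Pj) ^ 2) • B.map (algebraMap (ZMod (p ^ (N + 1))) (AdjoinRoot Pj))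
          + AdjoinRoot.root Pj • (((p : AdjoinRoot Pj) ^ 2) •
              C.map (algebraMap (ZMod (p ^ (N + 1))) (AdjoinRoot Pj))) ∧
      ∃ (W U V : Matrix ((k : Fin (l + 1)) × Fin (nn k)) ((k : Fin (l + 1)) × Fin (nn k))
          (AdjoinRoot Pj)),
        IsUnit U ∧ IsUnit V ∧
        U * (X.map (algebraMap (ZMod (p ^ (N + 1))) (AdjoinRoot Pj))
          - AdjoinRoot.root Pj • 1) * V = W ∧
        (∀ (k k' : Fin (l + 1)), k ≠ k' → ∀ (a : Fin (nn k)) (b : Fin (nn k')),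
          W ⟨k, a⟩ ⟨k', b⟩ = 0) ∧
        (∀ a b : Fin (nn j), W ⟨j, a⟩ ⟨j, b⟩ = Z a b) ∧
        (∀ k, k ≠ j → IsUnit (Matrix.of fun a b : Fin (nn k) => W ⟨k, a⟩ ⟨k, b⟩)) ∧
        Nonempty (((((k : Fin (l + 1)) × Fin (nn k)) → AdjoinRoot Pj) ⧸
            LinearMap.range (X.map (algebraMap (ZMod (p ^ (N + 1))) (AdjoinRoot Pj))
              - AdjoinRoot.root Pj • 1).mulVecLin) ≃ₗ[AdjoinRoot Pj]
          ((Fin (nn j) → AdjoinRoot Pj) ⧸ LinearMap.range Z.mulVecLin)) :=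
  stmt_18_general p N l nn J Pj j hinv D E X hD1 hD2 hX
end
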